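/- arXiv:2103.16523 — 3 statements merged into one kernel-verified Lean document; each statement's English description precedes it below -/
import Mathlib

section
/- Generalized sector condition (scalar case): let l > 0 and define the deadzone φ_l(v) = sat_l(v) - v. Then for any v, ω ∈ ℝ with |v - ω| ≤ l and any t > 0, we have φ_l(v) · t · (φ_l(v) + ω) ≤ 0. -/
noncomputable def sat (l v : ℝ) : ℝ := max (-l) (min l v)

noncomputable def deadzone (l v : ℝ) : ℝ := sat l v - v

theorem sector_condition_scalar (l : ℝ) (hl : 0 < l) (v ω : ℝ)
    (hvω : |v - ω| ≤ l) (t : ℝ) (ht : 0 < t) :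
    deadzone l v * t * (deadzone l v + ω) ≤ 0 := by
  rw [abs_le] at hvω; obtain ⟨ha, hb⟩ := hvω
  unfold deadzone sat
  rcases le_total v (-l) with h | h
  · rw [min_eq_right (by linarith), max_eq_left (by linarith)]
    exact mul_nonpos_of_nonneg_of_nonpos (mul_nonneg (by linarith) ht.le) (by linarith)
  rcases le_total l v with h2 | h2
  · rw [min_eq_left h2, max_eq_right (by linarith)]
    exact mul_nonpos_of_nonpos_of_nonneg (mul_nonpos_of_nonpos_of_nonneg (by linarith) ht.le) (by linarith)
  · rw [min_eq_right h2, max_eq_right h]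
    simp
end

section
/- Generalized sector condition (vector case): let ℓ ∈ ℝ^m with all components positive and define φ_ℓ(v) componentwise by φ_ℓ(v)_k = sat_{ℓ_k}(v_k) - v_k. Then for any v, ω ∈ ℝ^m with |v_k - ω_k| ≤ ℓ_k for all k, and any diagonal positive definite matrix T ∈ ℝ^{m×m}, we have φ_ℓ(v)ᵀ T (φ_ℓ(v) + ω) ≤ 0. -/
open Matrix

noncomputable def deadzoneVec {m : ℕ} (ℓ v : Fin m → ℝ) : Fin m → ℝ :=
  fun k => sat (ℓ k) (v k) - v k

lemma sector_scalar (l v w : ℝ) (hl : 0 < l) (h : |v - w| ≤ l) :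
    (sat l v - v) * ((sat l v - v) + w) ≤ 0 := by
  rw [abs_le] at h
  unfold sat
  rcases le_or_gt v (-l) with h1 | h1
  · rw [min_eq_right (h1.trans (by linarith)), max_eq_left h1]
    nlinarith
  rcases le_or_gt l v with h2 | h2
  · rw [min_eq_left h2, max_eq_right (by linarith)]
    nlinarith
  · rw [min_eq_right h2.le, max_eq_right h1.le]
    simp

theorem sector_condition_vector {m : ℕ} (ℓ : Fin m → ℝ) (hℓ : ∀ k, 0 < ℓ k)
    (v ω : Fin m → ℝ) (hvω : ∀ k, |v k - ω k| ≤ ℓ k)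
    (t : Fin m → ℝ) (ht : ∀ k, 0 < t k) :
    deadzoneVec ℓ v ⬝ᵥ (Matrix.diagonal t).mulVec (deadzoneVec ℓ v + ω) ≤ 0 := by
  rw [dotProduct]
  apply Finset.sum_nonpos
  intro k _
  rw [mulVec_diagonal]
  have := sector_scalar (ℓ k) (v k) (ω k) (hℓ k) (hvω k)
  simp only [deadzoneVec, Pi.add_apply]
  nlinarith [ht k, (ht k).le]
end

section
/- Schur complement ellipsoid inclusion: let P ∈ ℝ^{n×n} be symmetric positive definite, K ∈ ℝ^{m×n}, ℓ ∈ (ℝ_{>0})^m, and μ > 0. If the block matrix [[P, Kᵀ], [K, μ·diag(ℓ)²]] is positive semidefinite, then every X ∈ ℝ^n with Xᵀ P X ≤ 1/μ satisfies |(KX)_k| ≤ ℓ_k for each 1 ≤ k ≤ m. -/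
/-!
Testing the positive semidefinite block matrix against `(X, s • eₖ)` gives the quadratic
`Xᵀ P X + 2 s (K X)ₖ + μ ℓₖ² s² ≥ 0` in `s`, whose discriminant is therefore nonpositive:
`(K X)ₖ² ≤ μ ℓₖ² · Xᵀ P X ≤ ℓₖ²`.
-/

open Matrix

namespace Matrix

variable {n m : Type*} [Fintype n] [Fintype m]

theorem fromBlocks_transpose_quadForm_sumElim_single [DecidableEq m] (P : Matrix n n ℝ)
    (K : Matrix m n ℝ) (D : Matrix m m ℝ) (x : n → ℝ) (k : m) (s : ℝ) :
    Sum.elim x (Pi.single k s) ⬝ᵥ fromBlocks P Kᵀ K D *ᵥ Sum.elim x (Pi.single k s) =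
      D k k * (s * s) + 2 * (K *ᵥ x) k * s + x ⬝ᵥ P *ᵥ x := by
  have hKx : x ⬝ᵥ Kᵀ.col k = (K *ᵥ x) k := dotProduct_comm _ _
  rw [fromBlocks_mulVec]
  simp only [Sum.elim_comp_inl, Sum.elim_comp_inr, sumElim_dotProduct_sumElim, dotProduct_add,
    single_dotProduct, mulVec_single, dotProduct_smul, op_smul_eq_mul, col_apply, hKx]
  ring

theorem PosSemidef.sq_mulVec_le_of_fromBlocks {P : Matrix n n ℝ} {K : Matrix m n ℝ}
    {D : Matrix m m ℝ} (h : (fromBlocks P Kᵀ K D).PosSemidef) (x : n → ℝ) (k : m) :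
    (K *ᵥ x) k ^ 2 ≤ D k k * (x ⬝ᵥ P *ᵥ x) := by
  classical
  have hquad : ∀ s, 0 ≤ D k k * (s * s) + 2 * (K *ᵥ x) k * s + x ⬝ᵥ P *ᵥ x := fun s ↦ by
    simpa only [fromBlocks_transpose_quadForm_sumElim_single, star_trivial] using
      h.dotProduct_mulVec_nonneg (Sum.elim x (Pi.single k s))
  have hdiscrim := discrim_le_zero hquad
  rw [discrim] at hdiscrim
  linarith

end Matrix

theorem mul_le_one_of_le_one_div {μ q : ℝ} (hq : 0 ≤ q) (h : q ≤ 1 / μ) : μ * q ≤ 1 := by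
  rcases le_or_gt μ 0 with hμ | hμ
  · nlinarith
  · rwa [le_div_iff₀' hμ] at h

theorem schur_ellipsoid_general {n m : ℕ} (P : Matrix (Fin n) (Fin n) ℝ)
    (K : Matrix (Fin m) (Fin n) ℝ) (ℓ : Fin m → ℝ) (hℓ : ∀ k, 0 < ℓ k)
    (μ : ℝ)
    (hblock : (Matrix.fromBlocks P Kᵀ K (μ • (Matrix.diagonal ℓ) ^ 2)).PosSemidef) :
    ∀ X : Fin n → ℝ, X ⬝ᵥ P.mulVec X ≤ 1 / μ → ∀ k, |K.mulVec X k| ≤ ℓ k := by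
  intro X hX k
  have hP : P.PosSemidef := hblock.submatrix Sum.inl
  have hPX : 0 ≤ X ⬝ᵥ P *ᵥ X := by simpa only [star_trivial] using hP.dotProduct_mulVec_nonneg X
  have hKX := hblock.sq_mulVec_le_of_fromBlocks X k
  rw [diagonal_pow, Matrix.smul_apply, diagonal_apply_eq, smul_eq_mul, Pi.pow_apply] at hKX
  refine abs_le_of_sq_le_sq ?_ (hℓ k).le
  calc (K *ᵥ X) k ^ 2 ≤ ℓ k ^ 2 * (μ * (X ⬝ᵥ P *ᵥ X)) := by linarith
    _ ≤ ℓ k ^ 2 * 1 := by gcongr; exact mul_le_one_of_le_one_div hPX hX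
    _ = ℓ k ^ 2 := mul_one _

theorem schur_ellipsoid {n m : ℕ} (P : Matrix (Fin n) (Fin n) ℝ) (hP : P.PosDef)
    (K : Matrix (Fin m) (Fin n) ℝ) (ℓ : Fin m → ℝ) (hℓ : ∀ k, 0 < ℓ k)
    (μ : ℝ) (hμ : 0 < μ)
    (hblock : (Matrix.fromBlocks P Kᵀ K (μ • (Matrix.diagonal ℓ) ^ 2)).PosSemidef) :
    ∀ X : Fin n → ℝ, X ⬝ᵥ P.mulVec X ≤ 1 / μ → ∀ k, |K.mulVec X k| ≤ ℓ k :=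
  schur_ellipsoid_general P K ℓ hℓ μ hblock
end
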